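/- Let Δ be a finitary argumentation framework and X ⊆ A admissible. Then ⋃_{k < ω} d^k(X) is the least fixpoint of the defense function d containing X. -/

import Mathlib

/-!
Since every argument has only finitely many attackers, defending an argument against an
increasing union of sets only ever uses finitely many of them, hence one of them: `d` is
ω-Scott continuous on `Set A`. As `X` is admissible, `X ⊆ d X`, so Kleene's fixed point
theorem applies to the chain `d^k X`.
-/

variable {A : Type*}

/-- The defense function of an argumentation framework with attack relation `r`. -/
def defense (r : A → A → Prop) (X : Set A) : Set A :=
  {x | ∀ y, r y x → ∃ z ∈ X, r z y}

/-- The neutrality function. -/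
def neut (r : A → A → Prop) (X : Set A) : Set A :=
  {x | ¬ ∃ y ∈ X, r y x}

/-- A framework is finitary if every argument has finitely many attackers. -/
def Finitary (r : A → A → Prop) : Prop := ∀ x, {y | r y x}.Finite

open OmegaCompletePartialOrder

lemma defense_mono (r : A → A → Prop) : Monotone (defense r) :=
  fun _ _ hXY _ hx y hy ↦
    let ⟨z, hz, hzy⟩ := hx y hy
    ⟨z, hXY hz, hzy⟩

lemma Finitary.defense_iUnion {r : A → A → Prop} (hfin : Finitary r) {ι : Type*} [Preorder ι]
    [IsDirected ι (· ≤ ·)] [Nonempty ι] {s : ι → Set A} (hs : Monotone s) :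
    defense r (⋃ i, s i) = ⋃ i, defense r (s i) := by
  refine subset_antisymm (fun x hx ↦ ?_) <|
    Set.iUnion_subset fun i ↦ defense_mono r (Set.subset_iUnion s i)
  have hx' : ∀ y, r y x → ∃ i, ∃ z ∈ s i, r z y := fun y hy ↦ by
    obtain ⟨z, hz, hzy⟩ := hx y hy
    obtain ⟨i, hzi⟩ := Set.mem_iUnion.1 hz
    exact ⟨i, z, hzi, hzy⟩
  choose! idx hidx using hx'
  obtain ⟨j, hj⟩ := ((hfin x).image idx).bddAbove
  refine Set.mem_iUnion.2 ⟨j, fun y hy ↦ ?_⟩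
  obtain ⟨z, hz, hzy⟩ := hidx y hy
  exact ⟨z, hs (hj ⟨y, hy, rfl⟩) hz, hzy⟩

def Finitary.defenseContinuousHom {r : A → A → Prop} (hfin : Finitary r) :
    Set A →𝒄 Set A where
  toFun := defense r
  monotone' := defense_mono r
  map_ωSup' c := hfin.defense_iUnion c.monotone

theorem iUnion_iterates_lfp_general (r : A → A → Prop) (hfin : Finitary r)
    (X : Set A) (hdef : X ⊆ defense r X) :
    defense r (⋃ k, (defense r)^[k] X) = ⋃ k, (defense r)^[k] X ∧
      X ⊆ ⋃ k, (defense r)^[k] X ∧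
      ∀ Z, defense r Z = Z → X ⊆ Z → (⋃ k, (defense r)^[k] X) ⊆ Z :=
  -- in `Set A`, `ωSup` of a chain unfolds definitionally to the union of its terms
  ⟨fixedPoints.ωSup_iterate_mem_fixedPoint hfin.defenseContinuousHom X hdef,
    Set.subset_iUnion (fun k ↦ (defense r)^[k] X) 0,
    fun _ hZ hXZ ↦ fixedPoints.ωSup_iterate_le_fixedPoint hfin.defenseContinuousHom X hdef hZ hXZ⟩

theorem iUnion_iterates_lfp (r : A → A → Prop) (hfin : Finitary r)
    (X : Set A) (hcf : X ⊆ neut r X) (hdef : X ⊆ defense r X) :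
    defense r (⋃ k, (defense r)^[k] X) = ⋃ k, (defense r)^[k] X ∧
      X ⊆ ⋃ k, (defense r)^[k] X ∧
      ∀ Z, defense r Z = Z → X ⊆ Z → (⋃ k, (defense r)^[k] X) ⊆ Z :=
  iUnion_iterates_lfp_general r hfin X hdef
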